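/- If N = (p_1 p_2 ⋯ p_t)^{2a} = m^2 is a quasiperfect number (where p_1, ..., p_t are distinct primes and a is a positive integer), then 2a + 1 ≡ 3 (mod 8) and every prime factor of 2a + 1 is congruent to 1 or 3 modulo 8. -/

import Mathlib

/-!
Write `N = m ^ 2`, so that `σ(N) = 2m² + 1`. Modulo every prime factor of `σ(N)` we have
`(2m)² ≡ -2`, so by the supplementary law for `-2` every divisor of `σ(N)` is `≡ 1, 3 (mod 8)`;
in particular so is every divisor of each `σ(pᵢ^{2a}) = 1 + pᵢ + ⋯ + pᵢ^{2a}`.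
Since `σ(2^{2a}) ≡ 7` and `σ(p^{2a}) ≡ a + 1 + a p (mod 8)` for odd `p`, all `pᵢ` are odd,
`∏ σ(pᵢ^{2a}) = 2m² + 1 ≡ 3`, and a factor `≡ 3` forces `a` odd. Then `σ(3^{2a}) ≡ 5` shows
`3 ∤ m`, so `3 ∣ 2m² + 1` and `3` divides some `σ(pᵢ^{2a})`, whence `3 ∣ 2a + 1`. Now
`1 + p + p² ∣ σ(p^{2a})` gives `pᵢ ≡ ±1 (mod 8)`. The factors with `pᵢ ≡ -1` are `≡ 1`, so some
`pᵢ ≡ 1`; for it `σ(pᵢ^{2a}) ≡ 2a + 1 ≢ 1`, and `1 + pᵢ + ⋯ + pᵢ^{d-1} ≡ d` divides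
`σ(pᵢ^{2a})` for every `d ∣ 2a + 1`.
-/

/-- A positive integer `N` is quasiperfect if `σ(N) = 2N + 1`. -/
def Quasiperfect (N : ℕ) : Prop :=
  0 < N ∧ ArithmeticFunction.sigma 1 N = 2 * N + 1

open Finset ArithmeticFunction
open scoped ArithmeticFunction.sigma

theorem geom_sum_range_mul {R : Type*} [CommSemiring R] (x : R) (d e : ℕ) :
    ∑ k ∈ range (d * e), x ^ k = (∑ k ∈ range d, x ^ k) * ∑ j ∈ range e, (x ^ d) ^ j := by
  induction e with
  | zero => simp
  | succ e ih =>
    rw [mul_add_one, sum_range_add, ih, sum_range_succ]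
    simp only [pow_add, pow_mul, ← mul_sum]
    ring

theorem geom_sum_dvd_geom_sum {R : Type*} [CommSemiring R] (x : R) {d n : ℕ} (h : d ∣ n) :
    ∑ k ∈ range d, x ^ k ∣ ∑ k ∈ range n, x ^ k := by
  obtain ⟨e, rfl⟩ := h
  rw [geom_sum_range_mul]
  exact dvd_mul_right _ _

theorem geom_sum_two_mul_add_one_of_sq_eq_one {R : Type*} [CommSemiring R] {x : R}
    (hx : x ^ 2 = 1) (a : ℕ) : ∑ k ∈ range (2 * a + 1), x ^ k = a + 1 + a * x := by
  induction a with
  | zero => simp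
  | succ a ih =>
    have hodd : x ^ (2 * a + 1) = x := by rw [pow_succ, pow_mul, hx, one_pow, one_mul]
    have heven : x ^ (2 * a + 1 + 1) = 1 := by rw [pow_succ, hodd, ← sq, hx]
    rw [show 2 * (a + 1) + 1 = 2 * a + 1 + 1 + 1 by ring, sum_range_succ, sum_range_succ, ih,
      hodd, heven]
    push_cast
    ring

theorem Odd.three_dvd_of_three_dvd_geom_sum {x n : ℕ} (hn : Odd n)
    (h : 3 ∣ ∑ k ∈ range n, x ^ k) : 3 ∣ n := by
  rw [← ZMod.natCast_eq_zero_iff] at h ⊢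
  push_cast at h
  rcases (by decide : ∀ y : ZMod 3, y = 0 ∨ y = 1 ∨ y = -1) x with hx | hx | hx <;>
    simp_all [zero_geom_sum, neg_one_geom_sum, hn.pos.ne', Nat.not_even_iff_odd.2 hn]

theorem natCast_zmod_eight_sq_eq_one_of_odd {n : ℕ} (hn : Odd n) : (n : ZMod 8) ^ 2 = 1 := by
  obtain ⟨k, rfl⟩ := hn
  obtain ⟨j, hj⟩ := Nat.even_mul_succ_self k
  have : ((k * (k + 1) : ℕ) : ZMod 8) = j + j := by rw [hj]; push_cast; ring
  push_cast at this ⊢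
  have h8 : (8 : ZMod 8) = 0 := rfl
  linear_combination 4 * this + (j : ZMod 8) * h8

theorem natCast_zmod_eight_eq_one_or_three_iff (d : ℕ) :
    ((d : ZMod 8) = 1 ∨ (d : ZMod 8) = 3) ↔ d % 8 = 1 ∨ d % 8 = 3 := by
  rw [← ZMod.natCast_mod]
  have := Nat.mod_lt d (show 8 > 0 by norm_num)
  interval_cases d % 8 <;> decide

theorem sigma_one_two_pow_mod_eight {n : ℕ} (hn : 2 ≤ n) : σ 1 (2 ^ n) % 8 = 7 := by
  rw [sigma_one_apply_prime_pow Nat.prime_two, Nat.geomSum_eq le_rfl, Nat.div_one]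
  exact mersenne_mod_eight (by omega)

theorem Nat.Prime.mod_eight_of_dvd_two_mul_sq_add_one {r m : ℕ} (hr : r.Prime)
    (h : r ∣ 2 * m ^ 2 + 1) : r % 8 = 1 ∨ r % 8 = 3 := by
  have := Fact.mk hr
  have h0 : 2 * (m : ZMod r) ^ 2 + 1 = 0 := by exact_mod_cast (ZMod.natCast_eq_zero_iff _ _).2 h
  have hr2 : r ≠ 2 := by
    rintro rfl
    omega
  exact (ZMod.exists_sq_eq_neg_two_iff hr2).1 ⟨2 * m, by linear_combination (-2 : ZMod r) * h0⟩

def DivisorsOneOrThreeModEight (n : ℕ) : Prop :=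
  ∀ d, d ∣ n → (d : ZMod 8) = 1 ∨ (d : ZMod 8) = 3

namespace DivisorsOneOrThreeModEight

theorem of_dvd {n k : ℕ} (hn : DivisorsOneOrThreeModEight n) (hk : k ∣ n) :
    DivisorsOneOrThreeModEight k :=
  fun d hd => hn d (hd.trans hk)

theorem two_mul_sq_add_one (m : ℕ) : DivisorsOneOrThreeModEight (2 * m ^ 2 + 1) := by
  intro d hd
  have hd0 : d ≠ 0 := by
    rintro rfl
    simp at hd
  rw [← Nat.prod_primeFactorsList hd0, Nat.cast_list_prod]
  refine List.prod_induction (fun x : ZMod 8 => x = 1 ∨ x = 3) (by decide) (.inl rfl) ?_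
  simp only [List.mem_map]
  rintro _ ⟨r, hr, rfl⟩
  exact (natCast_zmod_eight_eq_one_or_three_iff r).2 <|
    (Nat.prime_of_mem_primeFactorsList hr).mod_eight_of_dvd_two_mul_sq_add_one
      ((Nat.dvd_of_mem_primeFactorsList hr).trans hd)

theorem of_geom_sum {x n : ℕ} (hx : (x : ZMod 8) = 1)
    (h : DivisorsOneOrThreeModEight (∑ k ∈ range n, x ^ k)) : DivisorsOneOrThreeModEight n := by
  intro d hd
  simpa [hx] using h _ (geom_sum_dvd_geom_sum x hd)

end DivisorsOneOrThreeModEight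

theorem ArithmeticFunction.IsMultiplicative.map_prod_prime_pow {R ι : Type*}
    [CommMonoidWithZero R] {f : ArithmeticFunction R} (hf : f.IsMultiplicative) {p : ι → ℕ}
    (s : Finset ι) (hp : ∀ i ∈ s, (p i).Prime) (hinj : Set.InjOn p s) (e : ι → ℕ) :
    f (∏ i ∈ s, p i ^ e i) = ∏ i ∈ s, f (p i ^ e i) :=
  hf.map_prod _ s fun i hi j hj hij =>
    ((Nat.coprime_primes (hp i hi) (hp j hj)).2 fun h => hij (hinj hi hj h)).pow _ _

theorem natCast_sigma_one_prime_pow_two_mul {R : Type*} [CommSemiring R] {p : ℕ} (hp : p.Prime)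
    (hx : (p : R) ^ 2 = 1) (a : ℕ) : (σ 1 (p ^ (2 * a)) : R) = a + 1 + a * p := by
  rw [sigma_one_apply_prime_pow hp]
  push_cast
  exact geom_sum_two_mul_add_one_of_sq_eq_one hx a

theorem odd_of_natCast_sigma_one_prime_pow_eq_three {p a : ℕ} (hp : p.Prime) (hodd : Odd p)
    (h : (σ 1 (p ^ (2 * a)) : ZMod 8) = 3) : Odd a := by
  rw [natCast_sigma_one_prime_pow_two_mul hp (natCast_zmod_eight_sq_eq_one_of_odd hodd)] at h
  by_contra ha
  obtain ⟨c, rfl⟩ := Nat.not_odd_iff_even.1 ha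
  obtain ⟨d, rfl⟩ := hodd
  push_cast at h
  have h4 : (4 : ZMod 8) * (c * (d + 1)) = 2 := by linear_combination h
  exact (by decide : ∀ y : ZMod 8, 4 * y ≠ 2) _ h4

theorem natCast_sigma_one_three_pow {a : ℕ} (ha : Odd a) : (σ 1 (3 ^ (2 * a)) : ZMod 8) = 5 := by
  rw [natCast_sigma_one_prime_pow_two_mul Nat.prime_three (by decide)]
  obtain ⟨b, rfl⟩ := ha
  have h8 : (8 : ZMod 8) = 0 := rfl
  push_cast
  linear_combination (b : ZMod 8) * h8

theorem natCast_eq_one_or_neg_one_of_three_dvd {p a : ℕ} (hp : p.Prime) (hodd : Odd p)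
    (h3 : 3 ∣ 2 * a + 1) (hD : DivisorsOneOrThreeModEight (σ 1 (p ^ (2 * a)))) :
    (p : ZMod 8) = 1 ∨ (p : ZMod 8) = -1 := by
  rw [sigma_one_apply_prime_pow hp] at hD
  have h := hD.of_dvd (geom_sum_dvd_geom_sum p h3) _ dvd_rfl
  simp only [sum_range_succ, range_one, sum_singleton, Nat.cast_add, Nat.cast_pow,
    natCast_zmod_eight_sq_eq_one_of_odd hodd] at h
  rcases h with h | h
  · exact .inr (by linear_combination h)
  · exact .inl (by linear_combination h)

/-- The quasiperfect number `m ^ 2 = ∏ pᵢ ^ (2a)`, with `σ` already split over the distinct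
primes `pᵢ`. -/
structure EqualExponentQuasiperfect {ι : Type*} [Fintype ι] (p : ι → ℕ) (a m : ℕ) : Prop where
  prime : ∀ i, (p i).Prime
  sq_eq_prod : m ^ 2 = ∏ i, p i ^ (2 * a)
  prod_sigma_eq : ∏ i, σ 1 (p i ^ (2 * a)) = 2 * m ^ 2 + 1

namespace EqualExponentQuasiperfect

variable {ι : Type*} [Fintype ι] {p : ι → ℕ} {a m : ℕ}

theorem exponent_ne_zero (h : EqualExponentQuasiperfect p a m) : a ≠ 0 := by
  rintro rfl
  have hm := h.sq_eq_prod
  have hσ := h.prod_sigma_eq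
  simp_all

theorem divisorsOneOrThreeModEight_sigma (h : EqualExponentQuasiperfect p a m) (i : ι) :
    DivisorsOneOrThreeModEight (σ 1 (p i ^ (2 * a))) :=
  (DivisorsOneOrThreeModEight.two_mul_sq_add_one m).of_dvd
    (h.prod_sigma_eq ▸ dvd_prod_of_mem _ (mem_univ i))

theorem exists_eq_of_prime_dvd (h : EqualExponentQuasiperfect p a m) {r : ℕ} (hr : r.Prime)
    (hrm : r ∣ m) : ∃ i, p i = r := by
  have : r ∣ ∏ i, p i ^ (2 * a) := h.sq_eq_prod ▸ dvd_pow hrm two_ne_zero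
  obtain ⟨i, -, hi⟩ := hr.prime.exists_mem_finset_dvd this
  exact ⟨i, ((Nat.prime_dvd_prime_iff_eq hr (h.prime i)).1 (hr.dvd_of_dvd_pow hi)).symm⟩

theorem odd_prime (h : EqualExponentQuasiperfect p a m) (i : ι) : Odd (p i) := by
  refine (h.prime i).odd_of_ne_two fun h2 => ?_
  have h7 := sigma_one_two_pow_mod_eight (n := 2 * a) (by have := h.exponent_ne_zero; omega)
  have := h.divisorsOneOrThreeModEight_sigma i _ dvd_rfl
  rw [h2, ← ZMod.natCast_mod, h7] at this
  exact absurd this (by decide)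

theorem odd_root (h : EqualExponentQuasiperfect p a m) : Odd m := by
  by_contra hm
  obtain ⟨i, hi⟩ := h.exists_eq_of_prime_dvd Nat.prime_two (Nat.not_odd_iff_even.1 hm).two_dvd
  exact Nat.not_odd_iff_even.2 even_two (hi ▸ h.odd_prime i)

theorem prod_natCast_sigma (h : EqualExponentQuasiperfect p a m) :
    ∏ i, (σ 1 (p i ^ (2 * a)) : ZMod 8) = 3 := by
  rw [← Nat.cast_prod, h.prod_sigma_eq]
  push_cast
  rw [natCast_zmod_eight_sq_eq_one_of_odd h.odd_root]
  rfl

theorem exists_natCast_sigma_ne_one (h : EqualExponentQuasiperfect p a m) :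
    ∃ i, (σ 1 (p i ^ (2 * a)) : ZMod 8) ≠ 1 := by
  obtain ⟨i, -, hi⟩ := exists_ne_one_of_prod_ne_one (h.prod_natCast_sigma.trans_ne (by decide))
  exact ⟨i, hi⟩

theorem odd_exponent (h : EqualExponentQuasiperfect p a m) : Odd a := by
  obtain ⟨i, hi⟩ := h.exists_natCast_sigma_ne_one
  exact odd_of_natCast_sigma_one_prime_pow_eq_three (h.prime i) (h.odd_prime i)
    ((h.divisorsOneOrThreeModEight_sigma i _ dvd_rfl).resolve_left hi)

theorem three_dvd (h : EqualExponentQuasiperfect p a m) : 3 ∣ 2 * a + 1 := by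
  have hm : (m : ZMod 3) ≠ 0 := by
    rw [Ne, ZMod.natCast_eq_zero_iff]
    intro hm
    obtain ⟨i, hi⟩ := h.exists_eq_of_prime_dvd Nat.prime_three hm
    have := h.divisorsOneOrThreeModEight_sigma i _ dvd_rfl
    rw [hi, natCast_sigma_one_three_pow h.odd_exponent] at this
    exact absurd this (by decide)
  have : 3 ∣ ∏ i, σ 1 (p i ^ (2 * a)) := by
    rw [h.prod_sigma_eq, ← ZMod.natCast_eq_zero_iff]
    push_cast
    generalize (m : ZMod 3) = y at hm
    revert y
    decide
  obtain ⟨i, -, hi⟩ := Nat.prime_three.prime.exists_mem_finset_dvd this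
  rw [sigma_one_apply_prime_pow (h.prime i)] at hi
  exact (odd_two_mul_add_one a).three_dvd_of_three_dvd_geom_sum hi

theorem natCast_prime_eq_one_or_neg_one (h : EqualExponentQuasiperfect p a m) (i : ι) :
    (p i : ZMod 8) = 1 ∨ (p i : ZMod 8) = -1 :=
  natCast_eq_one_or_neg_one_of_three_dvd (h.prime i) (h.odd_prime i) h.three_dvd
    (h.divisorsOneOrThreeModEight_sigma i)

theorem exists_natCast_prime_eq_one (h : EqualExponentQuasiperfect p a m) :
    ∃ i, (p i : ZMod 8) = 1 ∧ (σ 1 (p i ^ (2 * a)) : ZMod 8) ≠ 1 := by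
  obtain ⟨i, hi⟩ := h.exists_natCast_sigma_ne_one
  refine ⟨i, (h.natCast_prime_eq_one_or_neg_one i).resolve_right fun hpi => hi ?_, hi⟩
  rw [natCast_sigma_one_prime_pow_two_mul (h.prime i) (by rw [hpi]; ring), hpi]
  ring

theorem divisorsOneOrThreeModEight_two_mul_add_one (h : EqualExponentQuasiperfect p a m) :
    DivisorsOneOrThreeModEight (2 * a + 1) := by
  obtain ⟨i, hpi, -⟩ := h.exists_natCast_prime_eq_one
  have hD := h.divisorsOneOrThreeModEight_sigma i
  rw [sigma_one_apply_prime_pow (h.prime i)] at hD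
  exact hD.of_geom_sum hpi

theorem natCast_two_mul_add_one (h : EqualExponentQuasiperfect p a m) :
    ((2 * a + 1 : ℕ) : ZMod 8) = 3 := by
  obtain ⟨i, hpi, hi⟩ := h.exists_natCast_prime_eq_one
  rw [sigma_one_apply_prime_pow (h.prime i)] at hi
  refine (h.divisorsOneOrThreeModEight_two_mul_add_one _ dvd_rfl).resolve_left ?_
  simpa [hpi] using hi

end EqualExponentQuasiperfect

theorem stmt_2_general (t : ℕ) (p : Fin t → ℕ) (a N m : ℕ)
    (hp : ∀ i, (p i).Prime) (hinj : Function.Injective p)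
    (hN : N = (∏ i, p i) ^ (2 * a)) (hm : N = m ^ 2)
    (hq : Quasiperfect N) :
    (2 * a + 1) % 8 = 3 ∧
      ∀ q : ℕ, q.Prime → q ∣ 2 * a + 1 → q % 8 = 1 ∨ q % 8 = 3 := by
  have hN' : N = ∏ i, p i ^ (2 * a) := by rw [hN, prod_pow]
  have h : EqualExponentQuasiperfect p a m :=
    { prime := hp
      sq_eq_prod := hm ▸ hN'
      prod_sigma_eq := by
        rw [← isMultiplicative_sigma.map_prod_prime_pow univ (fun i _ => hp i) hinj.injOn
          (fun _ => 2 * a), ← hN', hq.2, hm] }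
  refine ⟨?_, fun q _ hq => (natCast_zmod_eight_eq_one_or_three_iff q).1
    (h.divisorsOneOrThreeModEight_two_mul_add_one q hq)⟩
  have h3 := congrArg ZMod.val h.natCast_two_mul_add_one
  rwa [ZMod.val_natCast] at h3

/-- If `N = (p₁ p₂ ⋯ p_t)^{2a} = m²` is quasiperfect, then `2a + 1 ≡ 3 (mod 8)`
and every prime factor of `2a + 1` is congruent to `1` or `3` modulo `8`. -/
theorem stmt_2 (t : ℕ) (p : Fin t → ℕ) (a N m : ℕ)
    (hp : ∀ i, (p i).Prime) (hinj : Function.Injective p)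
    (ha : 0 < a)
    (hN : N = (∏ i, p i) ^ (2 * a)) (hm : N = m ^ 2)
    (hq : Quasiperfect N) :
    (2 * a + 1) % 8 = 3 ∧
      ∀ q : ℕ, q.Prime → q ∣ 2 * a + 1 → q % 8 = 1 ∨ q % 8 = 3 :=
  stmt_2_general t p a N m hp hinj hN hm hq
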